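/- arXiv:2306.01387 — 3 statements merged into one kernel-verified Lean document; each statement's English description precedes it below -/
import Mathlib

section
/- Let (A,B,C,D) be a discrete-time LTI system with A ∈ ℝ^{n×n}, B ∈ ℝ^{n×m}, C ∈ ℝ^{p×n}, D ∈ ℝ^{p×m}, and let (u^d, y^d) be a length-T trajectory of this system. Fix L ≤ T. Then for every vector g ∈ ℝ^{T−L+1}, the pair (H_L(u^d) g, H_L(y^d) g) ∈ ℝ^{mL} × ℝ^{pL} (viewed as length-L input and output sequences) is a length-L trajectory of the system (A,B,C,D). -/
/-- The depth-`L` Hankel matrix of a signal `u : {1,…,T} → ℝ^m` (indexed here by `Fin T`).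
Its `j`-th column is the stacked vector `col(u j, u (j+1), …, u (j+L-1)) ∈ ℝ^{mL}`. -/
def hankel (m T L : ℕ) (u : Fin T → Fin m → ℝ) :
    Matrix (Fin L × Fin m) (Fin (T + 1 - L)) ℝ :=
  fun ir j => if h : (j : ℕ) + (ir.1 : ℕ) < T then u ⟨(j : ℕ) + (ir.1 : ℕ), h⟩ ir.2 else 0

/-- `(u, y)` is a length-`L` trajectory of the discrete-time LTI system `(A, B, C, D)`:
there is a state sequence `x` with `x(k+1) = A x(k) + B u(k)` and `y(k) = C x(k) + D u(k)`. -/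
def IsTrajectory (n m p L : ℕ)
    (A : Matrix (Fin n) (Fin n) ℝ) (B : Matrix (Fin n) (Fin m) ℝ)
    (C : Matrix (Fin p) (Fin n) ℝ) (D : Matrix (Fin p) (Fin m) ℝ)
    (u : Fin L → Fin m → ℝ) (y : Fin L → Fin p → ℝ) : Prop :=
  ∃ x : Fin L → Fin n → ℝ,
    (∀ k : ℕ, (h : k + 1 < L) →
      x ⟨k + 1, h⟩ = A.mulVec (x ⟨k, by omega⟩) + B.mulVec (u ⟨k, by omega⟩)) ∧
    (∀ k : Fin L, y k = C.mulVec (x k) + D.mulVec (u k))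

/-
The trajectories of a fixed LTI system form a linear subspace, and every length-`L` window of a
trajectory is again a trajectory. The pair `(H_L(u) g, H_L(y) g)` is the `g`-weighted sum of the
windows of `(u, y)` starting at `0, …, T - L`, one for each column of the Hankel matrices.
-/

open Matrix

section Trajectory

variable {n m p L : ℕ} {A : Matrix (Fin n) (Fin n) ℝ} {B : Matrix (Fin n) (Fin m) ℝ}
  {C : Matrix (Fin p) (Fin n) ℝ} {D : Matrix (Fin p) (Fin m) ℝ}

theorem IsTrajectory.zero : IsTrajectory n m p L A B C D 0 0 :=
  ⟨0, fun _ _ => by simp, fun _ => by simp⟩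

theorem IsTrajectory.add {u u' : Fin L → Fin m → ℝ} {y y' : Fin L → Fin p → ℝ}
    (h : IsTrajectory n m p L A B C D u y) (h' : IsTrajectory n m p L A B C D u' y') :
    IsTrajectory n m p L A B C D (u + u') (y + y') := by
  obtain ⟨x, hx, hy⟩ := h
  obtain ⟨x', hx', hy'⟩ := h'
  refine ⟨x + x', fun k hk => ?_, fun k => ?_⟩
  · simp only [Pi.add_apply, hx k hk, hx' k hk, mulVec_add]
    abel
  · simp only [Pi.add_apply, hy k, hy' k, mulVec_add]
    abel

theorem IsTrajectory.smul {u : Fin L → Fin m → ℝ} {y : Fin L → Fin p → ℝ}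
    (h : IsTrajectory n m p L A B C D u y) (c : ℝ) :
    IsTrajectory n m p L A B C D (c • u) (c • y) := by
  obtain ⟨x, hx, hy⟩ := h
  refine ⟨c • x, fun k hk => ?_, fun k => ?_⟩
  · simp only [Pi.smul_apply, hx k hk, mulVec_smul, smul_add]
  · simp only [Pi.smul_apply, hy k, mulVec_smul, smul_add]

variable (n m p L A B C D) in
def trajectorySubmodule : Submodule ℝ ((Fin L → Fin m → ℝ) × (Fin L → Fin p → ℝ)) where
  carrier := {w | IsTrajectory n m p L A B C D w.1 w.2}
  zero_mem' := IsTrajectory.zero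
  add_mem' := IsTrajectory.add
  smul_mem' c _ h := h.smul c

theorem mem_trajectorySubmodule {u : Fin L → Fin m → ℝ} {y : Fin L → Fin p → ℝ} :
    (u, y) ∈ trajectorySubmodule n m p L A B C D ↔ IsTrajectory n m p L A B C D u y :=
  Iff.rfl

theorem IsTrajectory.window {T : ℕ} {u : Fin T → Fin m → ℝ} {y : Fin T → Fin p → ℝ}
    (h : IsTrajectory n m p T A B C D u y) (s : ℕ) (hs : s + L ≤ T) :
    IsTrajectory n m p L A B C D (fun k => u ⟨s + k, by omega⟩) (fun k => y ⟨s + k, by omega⟩) := by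
  obtain ⟨x, hx, hy⟩ := h
  exact ⟨fun k => x ⟨s + k, by omega⟩, fun k hk => hx (s + k) (by omega), fun k => hy _⟩

end Trajectory

theorem add_le_of_lt_add_one_sub {T L j : ℕ} (hj : j < T + 1 - L) : j + L ≤ T := by
  omega

theorem add_lt_of_lt_add_one_sub {T L j k : ℕ} (hj : j < T + 1 - L) (hk : k < L) : j + k < T :=
  (Nat.add_lt_add_left hk j).trans_le (add_le_of_lt_add_one_sub hj)

theorem hankel_mulVec_apply {m T L : ℕ} (u : Fin T → Fin m → ℝ) (g : Fin (T + 1 - L) → ℝ)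
    (k : Fin L) (r : Fin m) :
    (hankel m T L u *ᵥ g) (k, r) = ∑ j, g j * u ⟨j + k, add_lt_of_lt_add_one_sub j.2 k.2⟩ r := by
  simp only [mulVec, dotProduct]
  refine Finset.sum_congr rfl fun j _ => ?_
  rw [hankel, dif_pos (add_lt_of_lt_add_one_sub j.2 k.2), mul_comm]

theorem hankel_mulVec_isTrajectory_general
    (n m p T L : ℕ)
    (A : Matrix (Fin n) (Fin n) ℝ) (B : Matrix (Fin n) (Fin m) ℝ)
    (C : Matrix (Fin p) (Fin n) ℝ) (D : Matrix (Fin p) (Fin m) ℝ)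
    (ud : Fin T → Fin m → ℝ) (yd : Fin T → Fin p → ℝ)
    (htraj : IsTrajectory n m p T A B C D ud yd)
    (g : Fin (T + 1 - L) → ℝ) :
    IsTrajectory n m p L A B C D
      (fun k r => (hankel m T L ud).mulVec g (k, r))
      (fun k r => (hankel p T L yd).mulVec g (k, r)) := by
  have hsum : ((fun k r => (hankel m T L ud *ᵥ g) (k, r)), fun k r => (hankel p T L yd *ᵥ g) (k, r))
      = ∑ j, g j • ((fun k : Fin L => ud ⟨j + k, add_lt_of_lt_add_one_sub j.2 k.2⟩),
        fun k : Fin L => yd ⟨j + k, add_lt_of_lt_add_one_sub j.2 k.2⟩) := by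
    ext k r <;> simp [hankel_mulVec_apply, Prod.fst_sum, Prod.snd_sum, Finset.sum_apply]
  rw [← mem_trajectorySubmodule, hsum]
  exact Submodule.sum_mem _ fun j _ => Submodule.smul_mem _ (g j)
    (mem_trajectorySubmodule.2 (htraj.window j (add_le_of_lt_add_one_sub j.2)))

/-- If `(u^d, y^d)` is a length-`T` trajectory of the LTI system `(A,B,C,D)` and `L ≤ T`,
then for every `g ∈ ℝ^{T−L+1}` the pair `(H_L(u^d) g, H_L(y^d) g)`, viewed as length-`L`
input and output sequences, is again a length-`L` trajectory of the system. -/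
theorem hankel_mulVec_isTrajectory
    (n m p T L : ℕ) (hLT : L ≤ T)
    (A : Matrix (Fin n) (Fin n) ℝ) (B : Matrix (Fin n) (Fin m) ℝ)
    (C : Matrix (Fin p) (Fin n) ℝ) (D : Matrix (Fin p) (Fin m) ℝ)
    (ud : Fin T → Fin m → ℝ) (yd : Fin T → Fin p → ℝ)
    (htraj : IsTrajectory n m p T A B C D ud yd)
    (g : Fin (T + 1 - L) → ℝ) :
    IsTrajectory n m p L A B C D
      (fun k r => (hankel m T L ud).mulVec g (k, r))
      (fun k r => (hankel p T L yd).mulVec g (k, r)) :=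
  hankel_mulVec_isTrajectory_general n m p T L A B C D ud yd htraj g
end

section
/- (Willems' fundamental lemma.) Let (A,B,C,D) be a discrete-time LTI system with A ∈ ℝ^{n×n}, B ∈ ℝ^{n×m}, C ∈ ℝ^{p×n}, D ∈ ℝ^{p×m}, such that the pair (A,B) is controllable. Let (u^d, y^d) be a length-T trajectory of this system, and suppose the input signal u^d is persistently exciting of order L + n, i.e., the Hankel matrix H_{L+n}(u^d) has full row rank m(L+n). Then for every length-L trajectory (u, y) of the system there exists a vector g ∈ ℝ^{T−L+1} such that H_L(u^d) g = u and H_L(y^d) g = y (where u ∈ ℝ^{mL} and y ∈ ℝ^{pL} denote the stacked input and output sequences). -/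
/-- The controllability matrix `[B, AB, …, A^{n−1}B] ∈ ℝ^{n×nm}`. -/
def ctrbMatrix (n m : ℕ) (A : Matrix (Fin n) (Fin n) ℝ) (B : Matrix (Fin n) (Fin m) ℝ) :
    Matrix (Fin n) (Fin n × Fin m) ℝ :=
  fun i kj => (A ^ (kj.1 : ℕ) * B) i kj.2

section AuxWillems
open Matrix Finset

lemma aux_rank_vecMul_eq_zero {ι κ : Type*} [Fintype ι] [Fintype κ] (M : Matrix ι κ ℝ)
    (h : M.rank = Fintype.card ι) : ∀ v, Matrix.vecMul v M = 0 → v = 0 := by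
  have li : LinearIndependent ℝ (fun i => M i) :=
    linearIndependent_iff_card_eq_finrank_span.mpr (by
      rw [Set.finrank, show (fun i => M i) = M.row from rfl, ← Matrix.rank_eq_finrank_span_row, h])
  intro v hv
  exact Matrix.vecMul_injective_iff.mpr li (by simpa using hv)

lemma aux_mulVec_surjective {ι κ : Type*} [Fintype ι] [Fintype κ] (M : Matrix ι κ ℝ)
    (h : ∀ v, Matrix.vecMul v M = 0 → v = 0) : Function.Surjective M.mulVec := by
  have hinj : Function.Injective M.vecMul := by
    intro v w hvw
    have h0 : Matrix.vecMul (v - w) M = 0 := by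
      rw [Matrix.sub_vecMul, show v ᵥ* M = w ᵥ* M from hvw, sub_self]
    exact sub_eq_zero.mp (h _ h0)
  have li : LinearIndependent ℝ (fun i => M i) := Matrix.vecMul_injective_iff.mp hinj
  have hrank : M.rank = Fintype.card ι := li.rank_matrix
  have htop : LinearMap.range M.mulVecLin = ⊤ := by
    apply Submodule.eq_top_of_finrank_eq
    rw [← Matrix.rank, hrank, Module.finrank_pi]
  intro b
  obtain ⟨g, hg⟩ := htop ▸ Submodule.mem_top (x := b)
  exact ⟨g, hg⟩

lemma aux_cayley (n : ℕ) (A : Matrix (Fin n) (Fin n) ℝ) :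
    A ^ n = ∑ k ∈ range n, (-(A.charpoly.coeff k)) • A ^ k := by
  have h := A.aeval_self_charpoly
  rw [Polynomial.aeval_eq_sum_range] at h
  rw [A.charpoly_natDegree_eq_dim, Fintype.card_fin, Finset.sum_range_succ] at h
  have hm : A.charpoly.coeff n = 1 := by
    have := A.charpoly_monic
    rwa [Polynomial.Monic, Polynomial.leadingCoeff, A.charpoly_natDegree_eq_dim,
      Fintype.card_fin] at this
  rw [hm, one_smul] at h
  have h2 : A ^ n = -(∑ x ∈ range n, A.charpoly.coeff x • A ^ x) := by
    rw [eq_neg_iff_add_eq_zero, add_comm]; exact h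
  rw [h2, ← Finset.sum_neg_distrib]
  exact Finset.sum_congr rfl fun k _ => (neg_smul _ _).symm


lemma aux_dot_sum_mulVec {n' : Type*} [Fintype n'] (s : Finset ℕ) (c : ℕ → ℝ)
    (M : ℕ → Matrix n' n' ℝ) (ξ v : n' → ℝ) :
    ξ ⬝ᵥ ((∑ k ∈ s, c k • M k) *ᵥ v) = ∑ k ∈ s, c k * (ξ ⬝ᵥ (M k *ᵥ v)) := by
  let l : Matrix n' n' ℝ →ₗ[ℝ] ℝ :=
    { toFun := fun W => ξ ⬝ᵥ (W *ᵥ v)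
      map_add' := fun W N => by
        beta_reduce
        rw [Matrix.add_mulVec, dotProduct_add]
      map_smul' := fun r W => by
        beta_reduce
        rw [Matrix.smul_mulVec, dotProduct_smul]; rfl }
  have h1 : ξ ⬝ᵥ ((∑ k ∈ s, c k • M k) *ᵥ v) = l (∑ k ∈ s, c k • M k) := rfl
  rw [h1, map_sum]
  exact Finset.sum_congr rfl fun k _ => by
    simp only [l, LinearMap.coe_mk, AddHom.coe_mk, Matrix.smul_mulVec,
      dotProduct_smul, smul_eq_mul]

lemma aux_hker (n m T L : ℕ) (hLT : L + n ≤ T) (hLpos : 0 < L)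
    (A : Matrix (Fin n) (Fin n) ℝ) (B : Matrix (Fin n) (Fin m) ℝ)
    (Ud : ℕ → Fin m → ℝ) (Xd : ℕ → Fin n → ℝ)
    (hstep : ∀ t, t + 1 < T → Xd (t + 1) = A.mulVec (Xd t) + B.mulVec (Ud t))
    (hPE' : ∀ μ : ℕ → Fin m → ℝ,
      (∀ j, j + (L + n) ≤ T → ∑ i ∈ range (L + n), ∑ r : Fin m, μ i r * Ud (j + i) r = 0) →
      ∀ i, i < L + n → ∀ r, μ i r = 0)
    (hC' : ∀ ξ : Fin n → ℝ, (∀ e, e < n → Matrix.vecMul ξ (A ^ e * B) = 0) → ξ = 0)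
    (η : Fin L → Fin m → ℝ) (ξ : Fin n → ℝ)
    (hrel : ∀ j : ℕ, j + L ≤ T →
      (∑ k : Fin L, ∑ r : Fin m, η k r * Ud (j + (k : ℕ)) r)
        + (∑ s : Fin n, ξ s * Xd j s) = 0) :
    (∀ k r, η k r = 0) ∧ (∀ s, ξ s = 0) := by
  set η' : ℕ → Fin m → ℝ := fun t r => if h : t < L then η ⟨t, h⟩ r else 0 with hη'
  set φ : ℕ → ℕ → Fin m → ℝ := fun k i r =>
    if i < k then -(Matrix.vecMul ξ (A ^ (k - 1 - i) * B)) r else -(η' (i - k) r) with hφ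
  have hφ0 : ∀ k i, L + k ≤ i → ∀ r, φ k i r = 0 := by
    intro k i hi r
    simp only [hφ]
    rw [if_neg (by omega)]
    simp only [hη']
    rw [dif_neg (by omega), neg_zero]
  have hφshift : ∀ k i r, φ (k + 1) (i + 1) r = φ k i r := by
    intro k i r
    simp only [hφ]
    by_cases h : i < k
    · rw [if_pos (by omega), if_pos h, show k + 1 - 1 - (i + 1) = k - 1 - i from by omega]
    · rw [if_neg (by omega), if_neg h, show i + 1 - (k + 1) = i - k from by omega]
  -- the key window formula
  have hphi : ∀ k, ∀ j, j + L + k ≤ T →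
      (∑ i ∈ range (L + k), ∑ r : Fin m, φ k i r * Ud (j + i) r)
        = ξ ⬝ᵥ ((A ^ k).mulVec (Xd j)) := by
    intro k
    induction k with
    | zero =>
      intro j hj
      have e1 : (∑ i ∈ range (L + 0), ∑ r : Fin m, φ 0 i r * Ud (j + i) r)
          = -∑ k : Fin L, ∑ r : Fin m, η k r * Ud (j + (k : ℕ)) r := by
        rw [Nat.add_zero, ← Fin.sum_univ_eq_sum_range
          (fun i => ∑ r : Fin m, φ 0 i r * Ud (j + i) r) L, ← Finset.sum_neg_distrib]
        refine Finset.sum_congr rfl fun k _ => ?_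
        rw [← Finset.sum_neg_distrib]
        refine Finset.sum_congr rfl fun r _ => ?_
        simp only [hφ, hη', Nat.not_lt_zero, if_false, Nat.sub_zero, dif_pos k.isLt,
          Fin.eta, neg_mul]
      rw [e1, pow_zero, Matrix.one_mulVec]
      have h0 := hrel j (by omega)
      simp only [dotProduct]
      linarith
    | succ k ih =>
      intro j hj
      have hstepj : Xd (j + 1) = A.mulVec (Xd j) + B.mulVec (Ud j) := hstep j (by omega)
      rw [show L + (k + 1) = (L + k) + 1 by omega, Finset.sum_range_succ']
      have e1 : (∑ i ∈ range (L + k), ∑ r : Fin m, φ (k + 1) (i + 1) r * Ud (j + (i + 1)) r)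
          = ξ ⬝ᵥ ((A ^ k).mulVec (Xd (j + 1))) := by
        rw [← ih (j + 1) (by omega)]
        refine Finset.sum_congr rfl fun i _ => Finset.sum_congr rfl fun r _ => ?_
        rw [hφshift k i r, show j + (i + 1) = j + 1 + i from by omega]
      have e2 : (∑ r : Fin m, φ (k + 1) 0 r * Ud (j + 0) r)
          = -((Matrix.vecMul ξ (A ^ k * B)) ⬝ᵥ Ud j) := by
        simp only [hφ, if_pos (Nat.succ_pos k), Nat.add_zero, dotProduct,
          show k + 1 - 1 - 0 = k from by omega, ← Finset.sum_neg_distrib]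
        exact Finset.sum_congr rfl fun r _ => by ring
      rw [e1, e2, hstepj, Matrix.mulVec_add, dotProduct_add, Matrix.mulVec_mulVec,
        Matrix.mulVec_mulVec, ← pow_succ, ← Matrix.dotProduct_mulVec]
      ring
  -- Cayley–Hamilton
  have hCH := aux_cayley n A
  set a : ℕ → ℝ := fun k => -(A.charpoly.coeff k) with ha
  set μ : ℕ → Fin m → ℝ := fun i r => φ n i r - ∑ k ∈ range n, a k * φ k i r with hμ
  have hphik : ∀ k, k ≤ n → ∀ j, j + (L + n) ≤ T →
      (∑ i ∈ range (L + n), ∑ r : Fin m, φ k i r * Ud (j + i) r)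
        = ξ ⬝ᵥ ((A ^ k).mulVec (Xd j)) := by
    intro k hk j hj
    rw [← hphi k j (by omega)]
    symm
    apply Finset.sum_subset (Finset.range_subset_range.mpr (by omega))
    intro i _ hi
    rw [Finset.mem_range, not_lt] at hi
    exact Finset.sum_eq_zero fun r _ => by rw [hφ0 k i hi r, zero_mul]
  have hμ0 : ∀ i, i < L + n → ∀ r, μ i r = 0 := by
    apply hPE'
    intro j hj
    have expand : (∑ i ∈ range (L + n), ∑ r : Fin m, μ i r * Ud (j + i) r)
        = (∑ i ∈ range (L + n), ∑ r : Fin m, φ n i r * Ud (j + i) r)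
          - ∑ k ∈ range n, a k *
              (∑ i ∈ range (L + n), ∑ r : Fin m, φ k i r * Ud (j + i) r) := by
      have hpt : ∀ i (r : Fin m), μ i r * Ud (j + i) r
          = φ n i r * Ud (j + i) r - ∑ k ∈ range n, a k * (φ k i r * Ud (j + i) r) := by
        intro i r
        simp only [hμ, sub_mul, Finset.sum_mul, mul_assoc]
      simp only [hpt, Finset.sum_sub_distrib, Finset.mul_sum]
      congr 1
      rw [show (∑ i ∈ range (L + n), ∑ r : Fin m, ∑ k ∈ range n, a k * (φ k i r * Ud (j + i) r))
          = ∑ i ∈ range (L + n), ∑ k ∈ range n, ∑ r : Fin m, a k * (φ k i r * Ud (j + i) r)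
        from Finset.sum_congr rfl fun i _ => Finset.sum_comm]
      exact Finset.sum_comm
    rw [expand, hphik n le_rfl j hj]
    have hrest : ∀ k ∈ range n, a k *
        (∑ i ∈ range (L + n), ∑ r : Fin m, φ k i r * Ud (j + i) r)
          = a k * (ξ ⬝ᵥ ((A ^ k).mulVec (Xd j))) := by
      intro k hk
      rw [hphik k (le_of_lt (Finset.mem_range.mp hk)) j hj]
    rw [Finset.sum_congr rfl hrest, ← aux_dot_sum_mulVec (range n) a (fun k => A ^ k) ξ (Xd j),
      ← hCH, sub_self]
  -- extract η = 0
  have hην : ∀ t, ∀ r : Fin m, η' t r = 0 := by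
    have key : ∀ d t r, L ≤ t + d → η' t r = 0 := by
      intro d
      induction d with
      | zero =>
        intro t r ht
        simp only [hη']
        rw [dif_neg (by omega)]
      | succ d ihd =>
        intro t r ht
        by_cases htL : L ≤ t
        · simp only [hη']; rw [dif_neg (by omega)]
        · have h1 := hμ0 (t + n) (by omega) r
          have h2 : φ n (t + n) r = -(η' t r) := by
            simp only [hφ]
            rw [if_neg (by omega), show t + n - n = t from by omega]
          have h3 : ∀ k ∈ range n, a k * φ k (t + n) r = 0 := by
            intro k hk
            rw [Finset.mem_range] at hk
            have : φ k (t + n) r = -(η' (t + n - k) r) := by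
              simp only [hφ]
              rw [if_neg (by omega)]
            rw [this, ihd (t + n - k) r (by omega), neg_zero, mul_zero]
          simp only [hμ, h2, Finset.sum_congr rfl h3, Finset.sum_const_zero, sub_zero] at h1
          linarith [h1]
    intro t r
    exact key L t r (by omega)
  have hξ0 : ∀ s, ξ s = 0 := by
    have hAB : ∀ e, e < n → Matrix.vecMul ξ (A ^ e * B) = 0 := by
      intro e
      induction e using Nat.strong_induction_on with
      | _ e IH =>
        intro he
        funext r
        have h1 := hμ0 (n - 1 - e) (by omega) r
        have h2 : φ n (n - 1 - e) r = -(Matrix.vecMul ξ (A ^ e * B)) r := by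
          simp only [hφ]
          rw [if_pos (by omega), show n - 1 - (n - 1 - e) = e from by omega]
        have h3 : ∀ k ∈ range n, a k * φ k (n - 1 - e) r = 0 := by
          intro k hk
          rw [Finset.mem_range] at hk
          by_cases hik : n - 1 - e < k
          · have : φ k (n - 1 - e) r = -(Matrix.vecMul ξ (A ^ (k - 1 - (n - 1 - e)) * B)) r := by
              simp only [hφ]
              rw [if_pos hik]
            rw [this, IH (k - 1 - (n - 1 - e)) (by omega) (by omega), Pi.zero_apply,
              neg_zero, mul_zero]
          · have : φ k (n - 1 - e) r = -(η' (n - 1 - e - k) r) := by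
              simp only [hφ]
              rw [if_neg hik]
            rw [this, hην _ r, neg_zero, mul_zero]
        simp only [hμ, h2, Finset.sum_congr rfl h3, Finset.sum_const_zero, sub_zero] at h1
        have : (Matrix.vecMul ξ (A ^ e * B)) r = 0 := by linarith [h1]
        simpa using this
    intro s
    rw [hC' ξ hAB]
    rfl
  refine ⟨fun k r => ?_, hξ0⟩
  have := hην k r
  simp only [hη'] at this
  rwa [dif_pos k.isLt, Fin.eta] at this

end AuxWillems

/-- **Willems' fundamental lemma.** If `(A,B)` is controllable, `(u^d, y^d)` is a
length-`T` trajectory of `(A,B,C,D)`, and `u^d` is persistently exciting of order `L + n`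
(the depth-`(L+n)` Hankel matrix of `u^d` has full row rank `m(L+n)`), then every
length-`L` trajectory `(u, y)` of the system can be written as
`(H_L(u^d) g, H_L(y^d) g)` for some `g ∈ ℝ^{T−L+1}`. -/
theorem willems_fundamental_lemma
    (n m p T L : ℕ) (hLT : L + n ≤ T)
    (A : Matrix (Fin n) (Fin n) ℝ) (B : Matrix (Fin n) (Fin m) ℝ)
    (C : Matrix (Fin p) (Fin n) ℝ) (D : Matrix (Fin p) (Fin m) ℝ)
    (hctrb : (ctrbMatrix n m A B).rank = n)
    (ud : Fin T → Fin m → ℝ) (yd : Fin T → Fin p → ℝ)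
    (htraj : IsTrajectory n m p T A B C D ud yd)
    (hpe : (hankel m T (L + n) ud).rank = m * (L + n)) :
    ∀ (u : Fin L → Fin m → ℝ) (y : Fin L → Fin p → ℝ),
      IsTrajectory n m p L A B C D u y →
      ∃ g : Fin (T + 1 - L) → ℝ,
        (∀ (k : Fin L) (r : Fin m), (hankel m T L ud).mulVec g (k, r) = u k r) ∧
        (∀ (k : Fin L) (r : Fin p), (hankel p T L yd).mulVec g (k, r) = y k r) := by
  intro u y hT
  rcases Nat.eq_zero_or_pos L with hL0 | hLpos
  · subst hL0
    exact ⟨0, fun k r => k.elim0, fun k r => k.elim0⟩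
  obtain ⟨x, hxstep, hxout⟩ := hT
  obtain ⟨xd, hdstep, hdout⟩ := htraj
  set N := T + 1 - L with hN
  -- total versions of the data signals
  set Ud : ℕ → Fin m → ℝ := fun t => if h : t < T then ud ⟨t, h⟩ else 0 with hUdd
  set Xd : ℕ → Fin n → ℝ := fun t => if h : t < T then xd ⟨t, h⟩ else 0 with hXdd
  set Yd : ℕ → Fin p → ℝ := fun t => if h : t < T then yd ⟨t, h⟩ else 0 with hYdd
  have hUd : ∀ t (h : t < T), Ud t = ud ⟨t, h⟩ := fun t h => dif_pos h
  have hYd : ∀ t (h : t < T), Yd t = yd ⟨t, h⟩ := fun t h => dif_pos h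
  have hstep : ∀ t, t + 1 < T → Xd (t + 1) = A.mulVec (Xd t) + B.mulVec (Ud t) := by
    intro t h
    simp only [hXdd, hUdd, dif_pos h, dif_pos (show t < T by omega)]
    exact hdstep t h
  have hout : ∀ t (h : t < T), Yd t = C.mulVec (Xd t) + D.mulVec (Ud t) := by
    intro t h
    simp only [hXdd, hUdd, hYdd, dif_pos h]
    exact hdout ⟨t, h⟩
  -- persistent excitation: trivial left kernel of the depth-(L+n) Hankel matrix
  have hPE : ∀ v : (Fin (L + n) × Fin m) → ℝ,
      Matrix.vecMul v (hankel m T (L + n) ud) = 0 → v = 0 := by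
    apply aux_rank_vecMul_eq_zero
    rw [hpe]; simp [Fintype.card_prod, mul_comm]
  -- controllability: trivial left kernel of the controllability matrix
  have hC : ∀ v : Fin n → ℝ, Matrix.vecMul v (ctrbMatrix n m A B) = 0 → v = 0 := by
    apply aux_rank_vecMul_eq_zero
    rw [hctrb]; simp
  -- the key kernel lemma
  have hPE' : ∀ μ : ℕ → Fin m → ℝ,
      (∀ j, j + (L + n) ≤ T →
        ∑ i ∈ Finset.range (L + n), ∑ r : Fin m, μ i r * Ud (j + i) r = 0) →
      ∀ i, i < L + n → ∀ r, μ i r = 0 := by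
    intro μ hwin i hi r
    have hv : (fun kr : Fin (L + n) × Fin m => μ kr.1 kr.2) = 0 := by
      apply hPE
      funext j
      have hj : (j : ℕ) + (L + n) ≤ T := by have := j.2; omega
      have hH : ∀ (i' : Fin (L + n)) (r' : Fin m),
          hankel m T (L + n) ud (i', r') j = Ud ((j : ℕ) + i') r' := by
        intro i' r'
        have hij : (j : ℕ) + (i' : ℕ) < T := by have := i'.2; omega
        simp [hankel, hUdd, dif_pos hij]
      have := hwin (j : ℕ) hj
      rw [← Fin.sum_univ_eq_sum_range
        (fun i' => ∑ r' : Fin m, μ i' r' * Ud ((j : ℕ) + i') r') (L + n)] at this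
      simpa [Matrix.vecMul, dotProduct, Fintype.sum_prod_type, hH] using this
    have := congr_fun hv (⟨i, hi⟩, r)
    simpa using this
  have hC' : ∀ ξ : Fin n → ℝ, (∀ e, e < n → Matrix.vecMul ξ (A ^ e * B) = 0) → ξ = 0 := by
    intro ξ hAB
    apply hC
    funext er
    obtain ⟨e, r⟩ := er
    have := congr_fun (hAB e e.2) r
    simpa [Matrix.vecMul, dotProduct, ctrbMatrix] using this
  have hker := aux_hker n m T L hLT hLpos A B Ud Xd hstep hPE' hC'
  -- the stacked matrix [H_L(ud); Xd] has full row rank, hence mulVec surjective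
  set M : Matrix ((Fin L × Fin m) ⊕ Fin n) (Fin N) ℝ :=
    fun i j => Sum.elim (fun kr : Fin L × Fin m => Ud ((j : ℕ) + kr.1) kr.2)
      (fun s => Xd j s) i with hM
  have hMker : ∀ v, Matrix.vecMul v M = 0 → v = 0 := by
    intro v hv
    have hcol : ∀ j : ℕ, j + L ≤ T →
        (∑ k : Fin L, ∑ r : Fin m, v (Sum.inl (k, r)) * Ud (j + k) r)
          + (∑ s : Fin n, v (Sum.inr s) * Xd j s) = 0 := by
      intro j hj
      have hjN : j < N := by omega
      have := congr_fun hv ⟨j, hjN⟩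
      simpa [Matrix.vecMul, dotProduct, hM, Fintype.sum_sum_type,
        Fintype.sum_prod_type] using this
    obtain ⟨hη, hξ⟩ := hker (fun k r => v (Sum.inl (k, r))) (fun s => v (Sum.inr s)) hcol
    funext i
    rcases i with (⟨k, r⟩ | s)
    · exact hη k r
    · exact hξ s
  have hsurj := aux_mulVec_surjective M hMker
  obtain ⟨g, hg⟩ := hsurj (Sum.elim (fun kr : Fin L × Fin m => u kr.1 kr.2)
    (fun s => x ⟨0, hLpos⟩ s))
  have htop : ∀ (k : Fin L) (r : Fin m), (∑ j : Fin N, Ud ((j : ℕ) + k) r * g j) = u k r := by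
    intro k r
    have := congr_fun hg (Sum.inl (k, r))
    simpa [Matrix.mulVec, dotProduct, hM] using this
  have hbot : ∀ s : Fin n, (∑ j : Fin N, Xd j s * g j) = x ⟨0, hLpos⟩ s := by
    intro s
    have := congr_fun hg (Sum.inr s)
    simpa [Matrix.mulVec, dotProduct, hM] using this
  -- the combined state trajectory matches x
  have hx : ∀ kk : ℕ, (h : kk < L) →
      ∀ s : Fin n, (∑ j : Fin N, Xd ((j : ℕ) + kk) s * g j) = x ⟨kk, h⟩ s := by
    intro kk
    induction kk with
    | zero =>
      intro h s
      simpa using hbot s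
    | succ kk ih =>
      intro h s
      have hkk : kk < L := by omega
      have hjkk : ∀ j : Fin N, (j : ℕ) + kk + 1 < T := by
        intro j; have := j.2; omega
      calc (∑ j : Fin N, Xd ((j : ℕ) + (kk + 1)) s * g j)
          = ∑ j : Fin N, ((A.mulVec (Xd ((j : ℕ) + kk)) + B.mulVec (Ud ((j : ℕ) + kk))) s) * g j := by
            refine Finset.sum_congr rfl fun j _ => ?_
            rw [show (j : ℕ) + (kk + 1) = ((j : ℕ) + kk) + 1 from by omega, hstep _ (hjkk j)]
        _ = (∑ s' : Fin n, A s s' * (∑ j : Fin N, Xd ((j : ℕ) + kk) s' * g j))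
            + (∑ r' : Fin m, B s r' * (∑ j : Fin N, Ud ((j : ℕ) + kk) r' * g j)) := by
            simp only [Matrix.mulVec, dotProduct, Pi.add_apply, add_mul,
              Finset.sum_add_distrib, Finset.sum_mul, Finset.mul_sum]
            rw [Finset.sum_comm, Finset.sum_comm (γ := Fin N)]
            congr 1 <;>
              exact Finset.sum_congr rfl fun j _ => Finset.sum_congr rfl fun s' _ => by ring
        _ = (A.mulVec (x ⟨kk, hkk⟩) + B.mulVec (u ⟨kk, hkk⟩)) s := by
            simp only [Matrix.mulVec, dotProduct, Pi.add_apply]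
            congr 1
            · exact Finset.sum_congr rfl fun s' _ => by rw [ih hkk s']
            · exact Finset.sum_congr rfl fun r' _ => by rw [htop ⟨kk, hkk⟩ r']
        _ = x ⟨kk + 1, h⟩ s := by rw [← hxstep kk h]
  constructor
  constructor
  · -- input part
    intro k r
    have hh : ∀ j : Fin N, hankel m T L ud (k, r) j = Ud ((j : ℕ) + k) r := by
      intro j
      have hj : (j : ℕ) + (k : ℕ) < T := by
        have := j.2; have := k.2; omega
      simp [hankel, hUdd, dif_pos hj]
    simp only [Matrix.mulVec, dotProduct, hh]
    exact htop k r
  · -- output part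
    intro k r
    have hh : ∀ j : Fin N, hankel p T L yd (k, r) j = Yd ((j : ℕ) + k) r := by
      intro j
      have hj : (j : ℕ) + (k : ℕ) < T := by
        have := j.2; have := k.2; omega
      simp [hankel, hYdd, dif_pos hj]
    simp only [Matrix.mulVec, dotProduct, hh]
    have hjk : ∀ j : Fin N, (j : ℕ) + (k : ℕ) < T := by
      intro j; have := j.2; have := k.2; omega
    calc (∑ j : Fin N, Yd ((j : ℕ) + k) r * g j)
        = ∑ j : Fin N, ((C.mulVec (Xd ((j : ℕ) + k)) + D.mulVec (Ud ((j : ℕ) + k))) r) * g j := by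
          refine Finset.sum_congr rfl fun j _ => ?_
          rw [hout _ (hjk j)]
      _ = (∑ s : Fin n, C r s * (∑ j : Fin N, Xd ((j : ℕ) + k) s * g j))
          + (∑ r' : Fin m, D r r' * (∑ j : Fin N, Ud ((j : ℕ) + k) r' * g j)) := by
          simp only [Matrix.mulVec, dotProduct, Pi.add_apply, add_mul, Finset.sum_add_distrib,
            Finset.sum_mul, Finset.mul_sum]
          rw [Finset.sum_comm, Finset.sum_comm (γ := Fin N)]
          congr 1 <;> exact Finset.sum_congr rfl fun j _ => Finset.sum_congr rfl fun s _ => by ring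
      _ = (C.mulVec (x k) + D.mulVec (u k)) r := by
          simp only [Matrix.mulVec, dotProduct, Pi.add_apply]
          congr 1
          · exact Finset.sum_congr rfl fun s _ => by rw [hx k k.2 s]
          · exact Finset.sum_congr rfl fun r' _ => by rw [htop k r']
      _ = y k r := by rw [← hxout k]
end

section
/- Let (A,B,C,D) be a discrete-time LTI system with A ∈ ℝ^{n×n}, B ∈ ℝ^{n×m}, C ∈ ℝ^{p×n}, D ∈ ℝ^{p×m}, let (u^d, y^d) be a length-T trajectory of this system, and let L ≤ T. Then the rank of the stacked Hankel matrix [H_L(u^d); H_L(y^d)] ∈ ℝ^{(m+p)L × (T−L+1)} is at most mL + n. -/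
open Matrix Module

theorem Matrix.rank_le_finrank_of_col_mem_range {K E ρ κ : Type*} [Field K] [Fintype κ]
    [AddCommGroup E] [Module K E] [FiniteDimensional K E]
    (M : Matrix ρ κ K) (Φ : E →ₗ[K] ρ → K) (h : ∀ j, M.col j ∈ LinearMap.range Φ) :
    M.rank ≤ finrank K E := by
  rw [rank_eq_finrank_span_cols]
  calc finrank K (Submodule.span K (Set.range M.col))
      ≤ finrank K (LinearMap.range Φ) :=
        Submodule.finrank_mono (Submodule.span_le.mpr (Set.range_subset_iff.mpr h))
    _ ≤ finrank K E := LinearMap.finrank_range_le Φ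

def window {R : Type*} {m : ℕ} (u : ℕ → Fin m → R) (L j : ℕ) : Fin L × Fin m → R :=
  fun kb => u (j + kb.1) kb.2

section Window

variable {R : Type*} [CommSemiring R] {n m p T L : ℕ}
  {A : Matrix (Fin n) (Fin n) R} {B : Matrix (Fin n) (Fin m) R}
  {x : ℕ → Fin n → R} {u : ℕ → Fin m → R}

theorem exists_linearMap_state_eq
    (hx : ∀ k, k + 1 < T → x (k + 1) = A *ᵥ x k + B *ᵥ u k) :
    ∀ i ≤ L, ∃ Ψ : ((Fin L × Fin m → R) × (Fin n → R)) →ₗ[R] Fin n → R,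
      ∀ j, j + i < T → x (j + i) = Ψ (window u L j, x j)
  | 0, _ => ⟨LinearMap.snd R _ _, fun j _ => rfl⟩
  | i + 1, hi => by
    obtain ⟨Ψ, hΨ⟩ := exists_linearMap_state_eq hx i (by omega)
    refine ⟨A.mulVecLin ∘ₗ Ψ + B.mulVecLin ∘ₗ
      LinearMap.funLeft R R (fun b => ((⟨i, hi⟩ : Fin L), b)) ∘ₗ LinearMap.fst R _ _,
      fun j hj => ?_⟩
    rw [← add_assoc, hx (j + i) hj, hΨ j (by omega)]
    rfl

theorem exists_linearMap_output_eq {C : Matrix (Fin p) (Fin n) R} {D : Matrix (Fin p) (Fin m) R}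
    {y : ℕ → Fin p → R}
    (hx : ∀ k, k + 1 < T → x (k + 1) = A *ᵥ x k + B *ᵥ u k)
    (hy : ∀ k < T, y k = C *ᵥ x k + D *ᵥ u k) (i : Fin L) :
    ∃ Θ : ((Fin L × Fin m → R) × (Fin n → R)) →ₗ[R] Fin p → R,
      ∀ j, j + i < T → y (j + i) = Θ (window u L j, x j) := by
  obtain ⟨Ψ, hΨ⟩ := exists_linearMap_state_eq hx i i.isLt.le
  refine ⟨C.mulVecLin ∘ₗ Ψ + D.mulVecLin ∘ₗ
    LinearMap.funLeft R R (fun b => (i, b)) ∘ₗ LinearMap.fst R _ _, fun j hj => ?_⟩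
  rw [hy _ hj, hΨ j hj]
  rfl

end Window

-- Signals on `Fin T` are read as sequences on `ℕ`, extended by `0`; times `≥ T` never matter.
theorem Fin.extend_val_apply {α : Type*} {T : ℕ} (f : Fin T → α) (e : ℕ → α) {k : ℕ}
    (hk : k < T) : Function.extend Fin.val f e k = f ⟨k, hk⟩ :=
  Fin.val_injective.extend_apply f e ⟨k, hk⟩

section Trajectory

variable {n m p T : ℕ} {A : Matrix (Fin n) (Fin n) ℝ} {B : Matrix (Fin n) (Fin m) ℝ}
  {C : Matrix (Fin p) (Fin n) ℝ} {D : Matrix (Fin p) (Fin m) ℝ}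
  {u : Fin T → Fin m → ℝ} {y : Fin T → Fin p → ℝ}

theorem IsTrajectory.exists_state (h : IsTrajectory n m p T A B C D u y) :
    ∃ x : ℕ → Fin n → ℝ,
      (∀ k, k + 1 < T → x (k + 1) = A *ᵥ x k + B *ᵥ Function.extend Fin.val u 0 k) ∧
      (∀ k < T, Function.extend Fin.val y 0 k =
        C *ᵥ x k + D *ᵥ Function.extend Fin.val u 0 k) := by
  obtain ⟨x, hx, hy⟩ := h
  refine ⟨Function.extend Fin.val x 0, fun k hk => ?_, fun k hk => ?_⟩
  · rw [Fin.extend_val_apply _ _ hk, Fin.extend_val_apply _ _ (by omega),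
      Fin.extend_val_apply _ _ (by omega), hx k hk]
  · rw [Fin.extend_val_apply _ _ hk, Fin.extend_val_apply _ _ hk,
      Fin.extend_val_apply _ _ hk, hy]

end Trajectory

theorem hankel_apply {m T L : ℕ} (u : Fin T → Fin m → ℝ) (i : Fin L) (b : Fin m)
    (j : Fin (T + 1 - L)) : hankel m T L u (i, b) j = Function.extend Fin.val u 0 (j + i) b := by
  have hij : (j : ℕ) + i < T := by omega
  rw [hankel, dif_pos hij, Fin.extend_val_apply _ _ hij]

def stackedMap {R E : Type*} [CommSemiring R] [AddCommMonoid E] [Module R E] {m p L : ℕ}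
    (Θ : Fin L → ((Fin L × Fin m → R) × E) →ₗ[R] Fin p → R) :
    ((Fin L × Fin m → R) × E) →ₗ[R] (Fin L × Fin m ⊕ Fin L × Fin p) → R :=
  LinearMap.pi (Sum.elim (fun kb => LinearMap.proj kb ∘ₗ LinearMap.fst R _ _)
    (fun ic => LinearMap.proj ic.2 ∘ₗ Θ ic.1))

theorem stacked_hankel_rank_le_general
    (n m p T L : ℕ)
    (A : Matrix (Fin n) (Fin n) ℝ) (B : Matrix (Fin n) (Fin m) ℝ)
    (C : Matrix (Fin p) (Fin n) ℝ) (D : Matrix (Fin p) (Fin m) ℝ)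
    (ud : Fin T → Fin m → ℝ) (yd : Fin T → Fin p → ℝ)
    (htraj : IsTrajectory n m p T A B C D ud yd) :
    (Matrix.fromRows (hankel m T L ud) (hankel p T L yd)).rank ≤ m * L + n := by
  obtain ⟨x, hx, hy⟩ := htraj.exists_state
  choose Θ hΘ using exists_linearMap_output_eq (L := L) hx hy
  have hcol : ∀ j, (fromRows (hankel m T L ud) (hankel p T L yd)).col j ∈
      LinearMap.range (stackedMap Θ) := by
    intro j
    refine ⟨(window (Function.extend Fin.val ud 0) L j, x j), ?_⟩
    ext (⟨i, b⟩ | ⟨i, c⟩)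
    · simp [stackedMap, hankel_apply, window]
    · simp [stackedMap, hankel_apply, hΘ i j (by omega)]
  calc _ ≤ finrank ℝ ((Fin L × Fin m → ℝ) × (Fin n → ℝ)) :=
        rank_le_finrank_of_col_mem_range _ _ hcol
    _ = m * L + n := by simp [mul_comm]

/-- If `(u^d, y^d)` is a length-`T` trajectory of the `n`-dimensional LTI system
`(A,B,C,D)` and `L ≤ T`, then the stacked Hankel matrix `[H_L(u^d); H_L(y^d)]`
has rank at most `mL + n`. -/
theorem stacked_hankel_rank_le
    (n m p T L : ℕ) (hLT : L ≤ T)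
    (A : Matrix (Fin n) (Fin n) ℝ) (B : Matrix (Fin n) (Fin m) ℝ)
    (C : Matrix (Fin p) (Fin n) ℝ) (D : Matrix (Fin p) (Fin m) ℝ)
    (ud : Fin T → Fin m → ℝ) (yd : Fin T → Fin p → ℝ)
    (htraj : IsTrajectory n m p T A B C D ud yd) :
    (Matrix.fromRows (hankel m T L ud) (hankel p T L yd)).rank ≤ m * L + n :=
  stacked_hankel_rank_le_general n m p T L A B C D ud yd htraj
end
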